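/- Let H_D, H_N be complex vector spaces, T : V_int →ₗ H_D a surjective linear map (the Dirichlet trace), and K, V₀, W, K† Calderón block operators with P⁻, P⁺ = Id − P⁻ as before. Define 𝒫 : (V_int × H_N) →ₗ (V_int' data) abstractly by the pair of equations a(U,·) − (W ∘ T)U + (−K† + ½)ξ = 0 and (K + ½)(T U) + V₀ ξ = 0, where a is a bilinear form encoding the interior operator. Suppose (U, ξ) satisfies both equations with a(U,V) = ⟨−N U, T V⟩ for a linear 'Neumann trace' N : V_int →ₗ H_N (i.e., L U = 0 weakly). Then P⁺(T U, ξ) = (T U, N U). -/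
import Mathlib


theorem stmt10 {H_D H_N V_int : Type*}
    [AddCommGroup H_D] [Module ℂ H_D] [AddCommGroup H_N] [Module ℂ H_N]
    [AddCommGroup V_int] [Module ℂ V_int]
    (K : H_D →ₗ[ℂ] H_D) (V₀ : H_N →ₗ[ℂ] H_D)
    (W : H_D →ₗ[ℂ] H_N) (K' : H_N →ₗ[ℂ] H_N)
    (Pp : H_D × H_N →ₗ[ℂ] H_D × H_N)
    (hPp : ∀ g η, Pp (g, η) =
      (-(K g) + (1/2 : ℂ) • g - V₀ η, -(W g) + (-(K' η) + (1/2 : ℂ) • η)))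
    (T : V_int →ₗ[ℂ] H_D) (hT : Function.Surjective T)
    (N : V_int →ₗ[ℂ] H_N)
    (a : V_int →ₗ[ℂ] V_int →ₗ[ℂ] ℂ)
    (pair : H_N →ₗ[ℂ] H_D →ₗ[ℂ] ℂ)
    (hpair : ∀ η : H_N, (∀ g : H_D, pair η g = 0) → η = 0)
    (U : V_int) (ξ : H_N)
    -- first equation of the coupled system
    (heq1 : ∀ V : V_int,
      a U V - pair (W (T U)) (T V)
        + pair (-(K' ξ) + (1/2 : ℂ) • ξ) (T V) = 0)
    -- second equation of the coupled system
    (heq2 : K (T U) + (1/2 : ℂ) • (T U) + V₀ ξ = 0)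
    -- Green's first formula: L U = 0 weakly
    (hGreen : ∀ V : V_int, a U V = pair (-(N U)) (T V)) :
    Pp (T U, ξ) = (T U, N U) := by
  rw [hPp]
  have h2 : -(K (T U)) + (1/2 : ℂ) • (T U) - V₀ ξ = T U := by
    have h : -(K (T U)) + (1/2 : ℂ) • (T U) - V₀ ξ
        = (1/2:ℂ) • (T U) + (1/2:ℂ) • (T U)
          - (K (T U) + (1/2:ℂ) • (T U) + V₀ ξ) := by abel
    rw [h, heq2, sub_zero, ← add_smul]; norm_num
  have h3 : -(W (T U)) + (-(K' ξ) + (1/2 : ℂ) • ξ) = N U := by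
    have key : -(W (T U)) + (-(K' ξ) + (1/2 : ℂ) • ξ) - N U = 0 := by
      apply hpair
      intro g
      obtain ⟨V, rfl⟩ := hT g
      have h1 := heq1 V
      rw [hGreen V] at h1
      simp only [map_sub, map_add, map_neg, map_smul, LinearMap.sub_apply,
        LinearMap.add_apply, LinearMap.neg_apply, LinearMap.smul_apply] at h1 ⊢
      linear_combination h1
    exact sub_eq_zero.mp key
  rw [h2, h3]
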